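/- Let V be a nonzero rational Hodge structure of weight 4, polarized by a pairing ⟨·,·⟩, such that dim V^{3,1} = 1, V^{4,0} = 0, and V contains no nonzero rational (2,2)-classes (i.e., V^{2,2} ∩ V_Q = 0). Then V has no proper nonzero rational sub-Hodge structure: any sub-Hodge structure W ⊆ V satisfies W = 0 or W = V. (It suffices to prove the following linear-algebra version: if W ⊆ V is a sub-Hodge structure with W^{3,1} = 0 then W ⊆ V^{2,2} ∩ V_Q = 0, and if W^{3,1} = V^{3,1} then the orthogonal complement W^⊥ is a sub-Hodge structure with (W^⊥)^{3,1} = 0, hence W^⊥ = 0 and W = V.) -/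

import Mathlib

open TensorProduct

/-- Complex conjugation on `ℂ ⊗_ℚ V`, acting on the first factor. -/
noncomputable def hodgeConj (V : Type) [AddCommGroup V] [Module ℚ V] :
    (ℂ ⊗[ℚ] V) →ₗ[ℚ] (ℂ ⊗[ℚ] V) :=
  TensorProduct.map (Complex.conjAe.toLinearMap.restrictScalars ℚ) LinearMap.id

/-- The complexification of a rational subspace `W ⊆ V` inside `ℂ ⊗_ℚ V`. -/
noncomputable def complexify (V : Type) [AddCommGroup V] [Module ℚ V]
    (W : Submodule ℚ V) : Submodule ℂ (ℂ ⊗[ℚ] V) :=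
  Submodule.span ℂ ((fun v => (1 : ℂ) ⊗ₜ[ℚ] v) '' (W : Set V))

/-- `W` is a sub-Hodge structure for the decomposition `Vpq` (indexed by `p`, where
`Vpq p` stands for `V^{p,4-p}`): the complexification of `W` is the (direct) sum of
its intersections with the pieces `V^{p,q}`. -/
noncomputable def IsSubHodge (V : Type) [AddCommGroup V] [Module ℚ V]
    (Vpq : Fin 5 → Submodule ℂ (ℂ ⊗[ℚ] V)) (W : Submodule ℚ V) : Prop :=
  complexify V W = ⨆ p, complexify V W ⊓ Vpq p

open Module

/-!
A nonzero sub-Hodge structure `X` must meet `V^{3,1}`: otherwise, by conjugation, it also misses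
`V^{1,3}`, so `X_ℂ ⊆ V^{2,2}` (as `V^{4,0} = V^{0,4} = 0`), and `X` would consist of rational
`(2,2)`-classes. Since `dim V^{3,1} = 1`, this forces `V^{3,1} ⊕ V^{1,3} ⊆ X_ℂ`, so `dim X ≥ 2`.
Conversely, every rational subspace whose complexification contains `V^{3,1}` contains all pieces
but `V^{2,2}`, hence is a sub-Hodge structure. So if `0 ≠ W ≠ V`, any hyperplane `H ⊇ W` is a
sub-Hodge structure, and `H^⊥` is a sub-Hodge structure of dimension `1`: a contradiction.
-/

section Complexification

variable (V : Type) [AddCommGroup V] [Module ℚ V]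

lemma hodgeConj_tmul (z : ℂ) (v : V) :
    hodgeConj V (z ⊗ₜ[ℚ] v) = (starRingEnd ℂ z) ⊗ₜ[ℚ] v := rfl

lemma hodgeConj_smul (c : ℂ) (x : ℂ ⊗[ℚ] V) :
    hodgeConj V (c • x) = (starRingEnd ℂ c) • hodgeConj V x := by
  induction x using TensorProduct.induction_on with
  | zero => simp
  | tmul z v =>
      rw [TensorProduct.smul_tmul', hodgeConj_tmul, hodgeConj_tmul, TensorProduct.smul_tmul',
        smul_eq_mul, smul_eq_mul, map_mul]
  | add x y hx hy => rw [smul_add, map_add, hx, hy, map_add, smul_add]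

lemma hodgeConj_involutive : Function.Involutive (hodgeConj V) := by
  intro x
  induction x using TensorProduct.induction_on with
  | zero => simp
  | tmul z v => rw [hodgeConj_tmul, hodgeConj_tmul, Complex.conj_conj]
  | add x y hx hy => rw [map_add, map_add, hx, hy]

lemma hodgeConj_eq_zero_iff {x : ℂ ⊗[ℚ] V} : hodgeConj V x = 0 ↔ x = 0 :=
  map_eq_zero_iff _ (hodgeConj_involutive V).injective

variable {V}

lemma one_tmul_mem_complexify {W : Submodule ℚ V} {w : V} (hw : w ∈ W) :
    (1 : ℂ) ⊗ₜ[ℚ] w ∈ complexify V W :=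
  Submodule.subset_span ⟨w, hw, rfl⟩

lemma complexify_mono {A B : Submodule ℚ V} (h : A ≤ B) :
    complexify V A ≤ complexify V B :=
  Submodule.span_mono (Set.image_mono h)

lemma hodgeConj_mem_complexify {W : Submodule ℚ V} {x : ℂ ⊗[ℚ] V}
    (hx : x ∈ complexify V W) : hodgeConj V x ∈ complexify V W := by
  induction hx using Submodule.span_induction with
  | mem x hx =>
      obtain ⟨w, hw, rfl⟩ := hx
      rw [hodgeConj_tmul, map_one]
      exact one_tmul_mem_complexify hw
  | zero => simp
  | add x y _ _ hx hy => rw [map_add]; exact Submodule.add_mem _ hx hy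
  | smul c x _ hx => rw [hodgeConj_smul]; exact Submodule.smul_mem _ _ hx

lemma hodgeConj_mem_complexify_iff {W : Submodule ℚ V} {x : ℂ ⊗[ℚ] V} :
    hodgeConj V x ∈ complexify V W ↔ x ∈ complexify V W :=
  ⟨fun hx => hodgeConj_involutive V x ▸ hodgeConj_mem_complexify hx, hodgeConj_mem_complexify⟩

lemma complexify_eq_range (W : Submodule ℚ V) :
    complexify V W = LinearMap.range (W.subtype.baseChange ℂ) := by
  apply le_antisymm
  · rw [complexify, Submodule.span_le]
    rintro _ ⟨w, hw, rfl⟩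
    exact ⟨(1 : ℂ) ⊗ₜ[ℚ] (⟨w, hw⟩ : W), rfl⟩
  · rintro _ ⟨x, rfl⟩
    induction x using TensorProduct.induction_on with
    | zero => simp
    | tmul z w =>
        rw [LinearMap.baseChange_tmul, ← mul_one z, ← smul_eq_mul, ← TensorProduct.smul_tmul']
        exact Submodule.smul_mem _ _ (one_tmul_mem_complexify w.2)
    | add x y hx hy => rw [map_add]; exact Submodule.add_mem _ hx hy

lemma finrank_complexify [FiniteDimensional ℚ V] (W : Submodule ℚ V) :
    finrank ℂ (complexify V W) = finrank ℚ W := by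
  have hinj : Function.Injective (W.subtype.baseChange ℂ) := by
    rw [LinearMap.baseChange_eq_ltensor]
    exact Module.Flat.lTensor_preserves_injective_linearMap _ W.injective_subtype
  rw [complexify_eq_range, LinearMap.finrank_range_of_inj hinj, Module.finrank_baseChange]

end Complexification

lemma eq_iSup_inf_of_forall_ne_le {α ι : Type*} [CompleteLattice α] [IsModularLattice α]
    {f : ι → α} (hf : ⨆ i, f i = ⊤) {S : α} (j : ι) (hS : ∀ i ≠ j, f i ≤ S) :
    S = ⨆ i, S ⊓ f i := by
  refine le_antisymm ?_ (iSup_le fun _ => inf_le_left)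
  have hrest : ⨆ (i) (_ : i ≠ j), f i ≤ S := iSup₂_le hS
  calc S = (⨆ (i) (_ : i ≠ j), f i) ⊔ S ⊓ f j := by
        rw [inf_comm S, ← sup_inf_assoc_of_le _ hrest, sup_comm, ← iSup_split_single, hf,
          top_inf_eq]
    _ ≤ ⨆ i, S ⊓ f i := by
        refine sup_le (iSup₂_le fun i hi => ?_) (le_iSup (fun i => S ⊓ f i) j)
        exact (le_inf (hS i hi) le_rfl).trans (le_iSup (fun i => S ⊓ f i) i)

lemma Submodule.exists_le_finrank_add_one_eq {K V : Type*} [Field K] [AddCommGroup V]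
    [Module K V] [FiniteDimensional K V] {W : Submodule K V} (hW : W ≠ ⊤) :
    ∃ H : Submodule K V, W ≤ H ∧ finrank K H + 1 = finrank K V := by
  obtain ⟨f, hf, hWf⟩ := W.exists_le_ker_of_lt_top hW.lt_top
  exact ⟨LinearMap.ker f, hWf, Module.Dual.finrank_ker_add_one_of_ne_zero hf⟩

section HodgeStructure

variable {V : Type} [AddCommGroup V] [Module ℚ V] {Vpq : Fin 5 → Submodule ℂ (ℂ ⊗[ℚ] V)}

def HodgeConjSymmetric (V : Type) [AddCommGroup V] [Module ℚ V]
    (Vpq : Fin 5 → Submodule ℂ (ℂ ⊗[ℚ] V)) : Prop :=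
  ∀ p : Fin 5, hodgeConj V '' (Vpq p : Set (ℂ ⊗[ℚ] V)) = (Vpq p.rev : Set (ℂ ⊗[ℚ] V))

lemma mem_rev_iff_hodgeConj_mem (hconj : HodgeConjSymmetric V Vpq) {p : Fin 5} {x : ℂ ⊗[ℚ] V} :
    x ∈ Vpq p.rev ↔ hodgeConj V x ∈ Vpq p := by
  have hmaps : ∀ {q : Fin 5} {y : ℂ ⊗[ℚ] V}, y ∈ Vpq q → hodgeConj V y ∈ Vpq q.rev :=
    fun {q} {_} hy => (hconj q).subset ⟨_, hy, rfl⟩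
  refine ⟨fun hx => ?_, fun hx => hodgeConj_involutive V x ▸ hmaps hx⟩
  simpa only [Fin.rev_rev] using hmaps hx

lemma rev_eq_bot_of_eq_bot (hconj : HodgeConjSymmetric V Vpq) {p : Fin 5} (h : Vpq p = ⊥) :
    Vpq p.rev = ⊥ := by
  refine eq_bot_iff.mpr fun x hx => ?_
  rw [mem_rev_iff_hodgeConj_mem hconj, h, Submodule.mem_bot, hodgeConj_eq_zero_iff] at hx
  exact hx ▸ Submodule.zero_mem _

lemma rev_le_complexify (hconj : HodgeConjSymmetric V Vpq) {p : Fin 5} {X : Submodule ℚ V}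
    (h : Vpq p ≤ complexify V X) : Vpq p.rev ≤ complexify V X := fun _ hx =>
  hodgeConj_mem_complexify_iff.mp (h ((mem_rev_iff_hodgeConj_mem hconj).mp hx))

lemma complexify_inf_rev_eq_bot (hconj : HodgeConjSymmetric V Vpq) {p : Fin 5}
    {X : Submodule ℚ V} (h : complexify V X ⊓ Vpq p = ⊥) : complexify V X ⊓ Vpq p.rev = ⊥ := by
  refine eq_bot_iff.mpr fun x ⟨hxX, hxp⟩ => ?_
  have hconj_x : hodgeConj V x ∈ complexify V X ⊓ Vpq p :=
    ⟨hodgeConj_mem_complexify hxX, (mem_rev_iff_hodgeConj_mem hconj).mp hxp⟩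
  rw [h, Submodule.mem_bot, hodgeConj_eq_zero_iff] at hconj_x
  exact hconj_x ▸ Submodule.zero_mem _

lemma isSubHodge_of_le_complexify (hdecomp : DirectSum.IsInternal Vpq)
    (hconj : HodgeConjSymmetric V Vpq) (h40 : Vpq 4 = ⊥) {X : Submodule ℚ V}
    (h3 : Vpq 3 ≤ complexify V X) : IsSubHodge V Vpq X := by
  refine eq_iSup_inf_of_forall_ne_le hdecomp.submodule_iSup_eq_top 2 fun p hp => ?_
  fin_cases p
  · exact (rev_eq_bot_of_eq_bot hconj h40).le.trans bot_le
  · exact rev_le_complexify hconj h3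
  · exact absurd rfl hp
  · exact h3
  · exact h40.le.trans bot_le

lemma eq_bot_of_complexify_le (h22 : ∀ v : V, ((1 : ℂ) ⊗ₜ[ℚ] v) ∈ Vpq 2 → v = 0)
    {X : Submodule ℚ V} (h : complexify V X ≤ Vpq 2) : X = ⊥ :=
  eq_bot_iff.mpr fun w hw => (Submodule.mem_bot ℚ).mpr (h22 w (h (one_tmul_mem_complexify hw)))

lemma le_complexify_of_isSubHodge (hconj : HodgeConjSymmetric V Vpq)
    (h31 : finrank ℂ (Vpq 3) = 1) (h40 : Vpq 4 = ⊥)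
    (h22 : ∀ v : V, ((1 : ℂ) ⊗ₜ[ℚ] v) ∈ Vpq 2 → v = 0) {X : Submodule ℚ V}
    (hX : IsSubHodge V Vpq X) (hne : X ≠ ⊥) : Vpq 3 ≤ complexify V X := by
  by_contra h3
  have h3' : complexify V X ⊓ Vpq 3 = ⊥ :=
    ((Submodule.isAtom_iff_finrank_eq_one.mpr h31).not_le_iff_disjoint.mp h3).symm.eq_bot
  have h1 : complexify V X ⊓ Vpq 1 = ⊥ := complexify_inf_rev_eq_bot hconj h3'
  refine hne (eq_bot_of_complexify_le h22 ?_)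
  rw [hX]
  refine iSup_le fun p => ?_
  fin_cases p
  · exact (inf_le_right.trans (rev_eq_bot_of_eq_bot hconj h40).le).trans bot_le
  · exact h1.le.trans bot_le
  · exact inf_le_right
  · exact h3'.le.trans bot_le
  · exact (inf_le_right.trans h40.le).trans bot_le

lemma two_le_finrank_of_le_complexify [FiniteDimensional ℚ V]
    (hdecomp : DirectSum.IsInternal Vpq) (hconj : HodgeConjSymmetric V Vpq)
    (h31 : finrank ℂ (Vpq 3) = 1) {X : Submodule ℚ V} (h3 : Vpq 3 ≤ complexify V X) :
    2 ≤ finrank ℚ X := by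
  have h1 : Vpq 1 ≠ ⊥ := fun h => by
    rw [show Vpq 3 = ⊥ from rev_eq_bot_of_eq_bot hconj h, finrank_bot] at h31
    exact zero_ne_one h31
  have hdisj : Vpq 3 ⊓ Vpq 1 = ⊥ :=
    (hdecomp.submodule_iSupIndep.pairwiseDisjoint (by decide : (3 : Fin 5) ≠ 1)).eq_bot
  have hsum := Submodule.finrank_sup_add_finrank_inf_eq (Vpq 3) (Vpq 1)
  have hle : finrank ℂ ↥(Vpq 3 ⊔ Vpq 1) ≤ finrank ℚ X :=
    finrank_complexify X ▸ Submodule.finrank_mono (sup_le h3 (rev_le_complexify hconj h3))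
  have hpos : finrank ℂ (Vpq 1) ≠ 0 := mt Submodule.finrank_eq_zero.mp h1
  rw [hdisj, finrank_bot, h31] at hsum
  omega

end HodgeStructure

theorem stmt_14_general (V : Type) [AddCommGroup V] [Module ℚ V] [FiniteDimensional ℚ V]
    (Vpq : Fin 5 → Submodule ℂ (ℂ ⊗[ℚ] V))
    (hdecomp : DirectSum.IsInternal Vpq)
    (hconj : ∀ p : Fin 5, hodgeConj V '' (Vpq p : Set (ℂ ⊗[ℚ] V)) = (Vpq p.rev : Set (ℂ ⊗[ℚ] V)))
    (h31 : Module.finrank ℂ (Vpq 3) = 1)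
    (h40 : Vpq 4 = ⊥)
    (h22 : ∀ v : V, ((1 : ℂ) ⊗ₜ[ℚ] v) ∈ Vpq 2 → v = 0)
    (B : LinearMap.BilinForm ℚ V)
    (hnd : B.Nondegenerate)
    (horth : ∀ W : Submodule ℚ V, IsSubHodge V Vpq W → IsSubHodge V Vpq (B.orthogonal W))
    (W : Submodule ℚ V) (hW : IsSubHodge V Vpq W) :
    W = ⊥ ∨ W = ⊤ := by
  refine or_iff_not_and_not.mpr fun ⟨hW_bot, hW_top⟩ => ?_
  obtain ⟨H, hWH, hH⟩ := Submodule.exists_le_finrank_add_one_eq hW_top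
  have hH_sub : IsSubHodge V Vpq H := isSubHodge_of_le_complexify hdecomp hconj h40
    ((le_complexify_of_isSubHodge hconj h31 h40 h22 hW hW_bot).trans (complexify_mono hWH))
  have hHperp : finrank ℚ (B.orthogonal H) = 1 := by
    rw [LinearMap.BilinForm.finrank_orthogonal hnd]
    omega
  have hHperp_ne : B.orthogonal H ≠ ⊥ := mt Submodule.finrank_eq_zero.mpr (by omega)
  have hHperp_two := two_le_finrank_of_le_complexify hdecomp hconj h31
    (le_complexify_of_isSubHodge hconj h31 h40 h22 (horth H hH_sub) hHperp_ne)
  omega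

/-- A nonzero polarized rational Hodge structure of weight 4 with `dim V^{3,1} = 1`,
`V^{4,0} = 0` and no nonzero rational `(2,2)`-classes has no proper nonzero rational
sub-Hodge structure. -/
theorem stmt_14 (V : Type) [AddCommGroup V] [Module ℚ V] [FiniteDimensional ℚ V]
    [Nontrivial V]
    (Vpq : Fin 5 → Submodule ℂ (ℂ ⊗[ℚ] V))
    (hdecomp : DirectSum.IsInternal Vpq)
    (hconj : ∀ p : Fin 5, hodgeConj V '' (Vpq p : Set (ℂ ⊗[ℚ] V)) = (Vpq p.rev : Set (ℂ ⊗[ℚ] V)))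
    (h31 : Module.finrank ℂ (Vpq 3) = 1)
    (h40 : Vpq 4 = ⊥)
    (h22 : ∀ v : V, ((1 : ℂ) ⊗ₜ[ℚ] v) ∈ Vpq 2 → v = 0)
    (B : LinearMap.BilinForm ℚ V) (hsymm : ∀ x y : V, B x y = B y x)
    (hnd : B.Nondegenerate)
    (horth : ∀ W : Submodule ℚ V, IsSubHodge V Vpq W → IsSubHodge V Vpq (B.orthogonal W))
    (W : Submodule ℚ V) (hW : IsSubHodge V Vpq W) :
    W = ⊥ ∨ W = ⊤ :=
  stmt_14_general V Vpq hdecomp hconj h31 h40 h22 B hnd horth W hW
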